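/- Let M be a finite monoid and let e, g_e, g_f, p_q, p_r, p_s, p_t ∈ M with g_e, g_f idempotent, g_e = p_q g_f p_t, and g_f = p_r g_e p_s. Then g_e = g_e p_s g_f p_r g_e, g_e = (g_e p_s g_f p_t g_e)^ω, g_f = g_f p_t g_e p_q g_f, and g_f = (g_f p_t g_e p_s g_f)^ω. -/
import Mathlib

private lemma exists_idem_pow {M : Type*} [Monoid M] [Fintype M] (a : M) :
    ∃ n, 0 < n ∧ a ^ n * a ^ n = a ^ n := by
  obtain ⟨i, j, hne, hij⟩ := Finite.exists_ne_map_eq_of_infinite (fun n : ℕ => a ^ (n + 1))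
  wlog hlt : i < j generalizing i j
  · exact this j i hne.symm hij.symm (by omega)
  set m := i + 1 with hm
  set k := j - i with hk
  have hkpos : 0 < k := by omega
  have hkey : a ^ m = a ^ (m + k) := by
    have : m + k = j + 1 := by omega
    rw [this]; exact hij
  have step : ∀ t, m ≤ t → a ^ (t + k) = a ^ t := by
    intro t ht
    obtain ⟨d, rfl⟩ := Nat.exists_eq_add_of_le ht
    have h' : m + d + k = (m + k) + d := by omega
    rw [h', pow_add, ← hkey, ← pow_add]
  have hmk : m ≤ m * k := Nat.le_mul_of_pos_right m hkpos
  have loop : ∀ c, a ^ (m * k + c * k) = a ^ (m * k) := by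
    intro c
    induction c with
    | zero => simp
    | succ c ih =>
      have h' : m * k + (c + 1) * k = (m * k + c * k) + k := by ring
      rw [h', step _ (by omega), ih]
  refine ⟨m * k, by positivity, ?_⟩
  rw [← pow_add]
  exact loop m

private lemma keyL {M : Type*} [Monoid M] [Fintype M] {e g a b : M}
    (heg : e * g = g) (hge : g * e = g) (hgg : g * g = g) (h : a * g * b = e) :
    g = e := by
  set A := a * g with hA
  set B := g * b with hB
  have h1 : A * e * B = e := by
    have : g * (e * (g * b)) = g * b := by
      rw [← mul_assoc, hge, ← mul_assoc, hgg]
    calc A * e * B = a * (g * (e * (g * b))) := by simp only [hA, hB, mul_assoc]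
    _ = a * (g * b) := by rw [this]
    _ = e := by rw [← mul_assoc]; exact h
  have h2 : ∀ n, A ^ (n + 1) * e * B ^ (n + 1) = e := by
    intro n
    induction n with
    | zero => simpa using h1
    | succ n ih =>
      calc A ^ (n + 2) * e * B ^ (n + 2)
          = A * (A ^ (n + 1) * e * B ^ (n + 1)) * B := by
            rw [pow_succ' A, pow_succ B]; simp only [mul_assoc]
      _ = A * e * B := by rw [ih]
      _ = e := h1
  obtain ⟨N, hNpos, hNidem⟩ := exists_idem_pow A
  obtain ⟨K, rfl⟩ : ∃ K, N = K + 1 := ⟨N - 1, by omega⟩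
  have h4 : A ^ (K + 1) * e = e := by
    calc A ^ (K + 1) * e = A ^ (K + 1) * (A ^ (K + 1) * e * B ^ (K + 1)) := by rw [h2 K]
    _ = (A ^ (K + 1) * A ^ (K + 1)) * e * B ^ (K + 1) := by simp only [mul_assoc]
    _ = A ^ (K + 1) * e * B ^ (K + 1) := by rw [hNidem]
    _ = e := h2 K
  have heB : e * B = B := by rw [hB, ← mul_assoc, heg]
  have h5 : e = B ^ (K + 1) := by
    calc e = A ^ (K + 1) * e * B ^ (K + 1) := (h2 K).symm
    _ = e * B ^ (K + 1) := by rw [h4]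
    _ = e * (B * B ^ K) := by rw [pow_succ']
    _ = B * B ^ K := by rw [← mul_assoc, heB]
    _ = B ^ (K + 1) := (pow_succ' B K).symm
  have hgB : g * B = B := by rw [hB, ← mul_assoc, hgg]
  calc g = g * e := hge.symm
  _ = g * (B * B ^ K) := by rw [h5, pow_succ']
  _ = B * B ^ K := by rw [← mul_assoc, hgB]
  _ = B ^ (K + 1) := (pow_succ' B K).symm
  _ = e := h5.symm

/-- Fact `etaprop`: in a finite monoid, with idempotents `ge, gf` such that
`ge = pq gf pt` and `gf = pr ge ps`, one has `ge = ge ps gf pr ge`,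
`ge = (ge ps gf pt ge)^ω`, `gf = gf pt ge pq gf` and `gf = (gf pt ge ps gf)^ω`,
where `x^ω` denotes the (unique) idempotent power of `x`. -/
theorem stmt_3 {M : Type*} [Monoid M] [Fintype M]
    (e ge gf pq pr ps pt : M)
    (hge : IsIdempotentElem ge) (hgf : IsIdempotentElem gf)
    (h1 : ge = pq * gf * pt) (h2 : gf = pr * ge * ps) :
    ge = ge * ps * gf * pr * ge ∧
    (∀ n : ℕ, 0 < n → IsIdempotentElem ((ge * ps * gf * pt * ge) ^ n) →
      (ge * ps * gf * pt * ge) ^ n = ge) ∧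
    gf = gf * pt * ge * pq * gf ∧
    (∀ n : ℕ, 0 < n → IsIdempotentElem ((gf * pt * ge * ps * gf) ^ n) →
      (gf * pt * ge * ps * gf) ^ n = gf) := by
  have hE : ∀ x, ge * (ge * x) = ge * x := fun x => by rw [← mul_assoc, hge.eq]
  have hF : ∀ x, gf * (gf * x) = gf * x := fun x => by rw [← mul_assoc, hgf.eq]
  have hQ : ∀ x, pq * (gf * (pt * x)) = ge * x := fun x => by
    simp only [← mul_assoc]; rw [← h1]
  have hR : ∀ x, pr * (ge * (ps * x)) = gf * x := fun x => by
    simp only [← mul_assoc]; rw [← h2]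
  have hQe : pq * (gf * pt) = ge := by rw [← mul_assoc, ← h1]
  have hRe : pr * (ge * ps) = gf := by rw [← mul_assoc, ← h2]
  refine ⟨?_, ?_, ?_, ?_⟩
  · -- ge = ge * ps * gf * pr * ge
    refine (keyL (e := ge) (a := pq * pr) (b := ps * pt) ?_ ?_ ?_ ?_).symm
    · simp only [mul_assoc]; simp only [hE]
    · simp only [mul_assoc]; simp only [hge.eq]
    · simp only [mul_assoc]; simp only [hE, hF, hR, hRe, hge.eq, hgf.eq]
    · simp only [mul_assoc]; simp only [hE, hF, hR, hQ, hRe, hQe, hge.eq, hgf.eq]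
  · -- (ge * ps * gf * pt * ge) ^ n = ge
    intro n hn hidem
    obtain ⟨m, rfl⟩ : ∃ m, n = m + 1 := ⟨n - 1, by omega⟩
    set z := ge * ps * gf * pt * ge with hz
    set A := pq * pr with hA
    have hez : ge * z = z := by
      simp only [hz, mul_assoc]; simp only [hE]
    have hezn : ∀ k, ge * z ^ (k + 1) = z ^ (k + 1) := by
      intro k; rw [pow_succ', ← mul_assoc, hez]
    have haz : A * z = ge := by
      simp only [hA, hz, mul_assoc]
      simp only [hE, hF, hR, hQ, hRe, hQe, hge.eq, hgf.eq]
    have hazn : ∀ k, A ^ (k + 1) * z ^ (k + 1) = ge := by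
      intro k
      induction k with
      | zero => simpa using haz
      | succ k ih =>
        calc A ^ (k + 2) * z ^ (k + 2)
            = A ^ (k + 1) * (ge * z ^ (k + 1)) := by
              rw [pow_succ A, pow_succ' z, mul_assoc, ← mul_assoc A z, haz]
        _ = A ^ (k + 1) * z ^ (k + 1) := by rw [hezn k]
        _ = ge := ih
    calc z ^ (m + 1) = ge * z ^ (m + 1) := (hezn m).symm
    _ = (A ^ (m + 1) * z ^ (m + 1)) * z ^ (m + 1) := by rw [hazn m]
    _ = A ^ (m + 1) * (z ^ (m + 1) * z ^ (m + 1)) := by rw [mul_assoc]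
    _ = A ^ (m + 1) * z ^ (m + 1) := by rw [hidem.eq]
    _ = ge := hazn m
  · -- gf = gf * pt * ge * pq * gf
    refine (keyL (e := gf) (a := pr * pq) (b := pt * ps) ?_ ?_ ?_ ?_).symm
    · simp only [mul_assoc]; simp only [hF]
    · simp only [mul_assoc]; simp only [hgf.eq]
    · simp only [mul_assoc]; simp only [hE, hF, hQ, hQe, hge.eq, hgf.eq]
    · simp only [mul_assoc]; simp only [hE, hF, hR, hQ, hRe, hQe, hge.eq, hgf.eq]
  · -- (gf * pt * ge * ps * gf) ^ n = gf
    intro n hn hidem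
    obtain ⟨m, rfl⟩ : ∃ m, n = m + 1 := ⟨n - 1, by omega⟩
    set z := gf * pt * ge * ps * gf with hz
    set A := pr * pq with hA
    have hez : gf * z = z := by
      simp only [hz, mul_assoc]; simp only [hF]
    have hezn : ∀ k, gf * z ^ (k + 1) = z ^ (k + 1) := by
      intro k; rw [pow_succ', ← mul_assoc, hez]
    have haz : A * z = gf := by
      simp only [hA, hz, mul_assoc]
      simp only [hE, hF, hR, hQ, hRe, hQe, hge.eq, hgf.eq]
    have hazn : ∀ k, A ^ (k + 1) * z ^ (k + 1) = gf := by
      intro k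
      induction k with
      | zero => simpa using haz
      | succ k ih =>
        calc A ^ (k + 2) * z ^ (k + 2)
            = A ^ (k + 1) * (gf * z ^ (k + 1)) := by
              rw [pow_succ A, pow_succ' z, mul_assoc, ← mul_assoc A z, haz]
        _ = A ^ (k + 1) * z ^ (k + 1) := by rw [hezn k]
        _ = gf := ih
    calc z ^ (m + 1) = gf * z ^ (m + 1) := (hezn m).symm
    _ = (A ^ (m + 1) * z ^ (m + 1)) * z ^ (m + 1) := by rw [hazn m]
    _ = A ^ (m + 1) * (z ^ (m + 1) * z ^ (m + 1)) := by rw [mul_assoc]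
    _ = A ^ (m + 1) * z ^ (m + 1) := by rw [hidem.eq]
    _ = gf := hazn m
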